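/- Fix $m>0$ and an integer $N_0 \ge 2$. For $0 \le n \le N_0$ let $X_n:[m/2,\infty)\to\mathbb{R}$ be $C^1$ and bounded, and for $1 \le n \le N_0$ let $Y_n:[m/2,\infty)\to\mathbb{R}$ be continuous. Assume: (i) $Y_1(r) = \frac{r^2\psi_0(r)}{3m} X_1'(r)$ and the limit $X_{1\infty} = \lim_{r\to\infty} X_1(r)$ exists; (ii) for each $2 \le n \le N_0$, with $N_n = \frac{n(n+1)}{2}$, the improper integrals $I_n = \int_{m/2}^{\infty}\big[(r X_n' - \beta_n Y_n)^2 + 2(N_n-1)\alpha X_n Y_n\big]\frac{dr}{\alpha r^2 \psi_0}$ and $\int_{m/2}^{\infty}\frac{\beta_n^2}{\alpha r^2\psi_0}\big(Y_n - \frac{r}{\beta_n}X_n' + \frac{(N_n-1)\alpha}{\beta_n^2}X_n\big)^2 dr$ converge. Then, with $I_1 = \int_{m/2}^{\infty}\frac{X_1 Y_1}{r^2\psi_0}dr$ and $c_n = \frac{2n(n+1)}{(n-1)(n+2)(2n+1)}$: $\frac{2m}{3} I_1 + \frac{m}{2}\sum_{n=2}^{N_0} c_n I_n + \frac12\sum_{n=0}^{N_0}\frac{X_n(m/2)^2}{2n+1}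 \;\ge\; \frac19 X_{1\infty}^2 + \frac12\sum_{n=0}^{N_0}\frac{X_n(m/2)^2}{(2n+1)(n^2+n+1)}$. -/

import Mathlib

/-- `ψ₀(r) = 1 + m/(2r)`. -/
noncomputable def psi0 (m r : ℝ) : ℝ := 1 + m / (2 * r)

/-- `α(r) = 1 - m/(2r)`. -/
noncomputable def alphaF (m r : ℝ) : ℝ := 1 - m / (2 * r)

/-- `β_n(r) = (n(n+1)/2 - 1) ψ₀(r) + 3m/(r ψ₀(r))`. -/
noncomputable def betaF (m : ℝ) (n : ℕ) (r : ℝ) : ℝ :=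
  ((n : ℝ) * ((n : ℝ) + 1) / 2 - 1) * psi0 m r + 3 * m / (r * psi0 m r)

/-- `c_n = 2n(n+1)/((n-1)(n+2)(2n+1))`. -/
noncomputable def cC (n : ℕ) : ℝ :=
  (2 * (n : ℝ) * ((n : ℝ) + 1)) / (((n : ℝ) - 1) * ((n : ℝ) + 2) * (2 * (n : ℝ) + 1))

/-- The improper integral `∫_a^∞ f` converges and equals `L`. -/
def ImproperEq (f : ℝ → ℝ) (a L : ℝ) : Prop :=
  (∀ b : ℝ, IntervalIntegrable f MeasureTheory.volume a b) ∧
    Filter.Tendsto (fun b : ℝ => ∫ r in a..b, f r) Filter.atTop (nhds L)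

/-!
For `n = 1` the integrand of `I₁` is the derivative of `X₁² / (6m)`, so
`(2m/3) I₁ = (X₁∞² - X₁(m/2)²) / 9`. For `n ≥ 2`, with `k = N_n - 1`, the integrand of `I_n` is
the (non-negative) integrand of the second integral plus the derivative of `k X_n² / (r ψ₀ β_n)`,
because `(r ψ₀ β_n)' = k α ψ₀`. As `X_n` is bounded this quotient vanishes at infinity, whence
`I_n ≥ -k X_n(m/2)² / (m (n² + n + 1))`, and the weight `c_n` converts this boundary term into
the difference of the two boundary weights of `X_n(m/2)²` in the estimate.
-/

open Filter Topology Set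

section ImproperEq

variable {f g F : ℝ → ℝ} {a L M l : ℝ}

theorem ImproperEq.sub (hf : ImproperEq f a L) (hg : ImproperEq g a M) :
    ImproperEq (fun r => f r - g r) a (L - M) :=
  ⟨fun b => (hf.1 b).sub (hg.1 b),
    (hf.2.sub hg.2).congr fun b => (intervalIntegral.integral_sub (hf.1 b) (hg.1 b)).symm⟩

theorem ImproperEq.nonneg (hf : ImproperEq f a L) (h : ∀ r, a < r → 0 ≤ f r) : 0 ≤ L :=
  ge_of_tendsto hf.2 <| (eventually_ge_atTop a).mono fun b hb => by
    rw [intervalIntegral.integral_of_le hb]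
    exact MeasureTheory.setIntegral_nonneg measurableSet_Ioc fun r hr => h r hr.1

theorem ImproperEq.eq_sub_of_hasDerivAt (hf : ImproperEq f a L) (hF : ContinuousOn F (Ici a))
    (hderiv : ∀ r, a < r → HasDerivAt F (f r) r) (hlim : Tendsto F atTop (𝓝 l)) :
    L = l - F a :=
  tendsto_nhds_unique hf.2 <| (hlim.sub_const (F a)).congr' <|
    (eventually_ge_atTop a).mono fun b hb =>
      (intervalIntegral.integral_eq_sub_of_hasDerivAt_of_le hb (hF.mono Icc_subset_Ici_self)
        (fun r hr => hderiv r hr.1) (hf.1 b)).symm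

end ImproperEq

theorem ContDiffOn.hasDerivAt_of_Ici {f : ℝ → ℝ} {a r : ℝ} (hf : ContDiffOn ℝ 1 f (Ici a))
    (hr : a < r) : HasDerivAt f (deriv f r) r :=
  ((hf.differentiableOn one_ne_zero).differentiableAt (Ici_mem_nhds hr)).hasDerivAt

theorem Finset.sum_range_succ_eq_add_add_sum_Icc {M : Type*} [AddCommMonoid M] (f : ℕ → M)
    {N : ℕ} (hN : 1 ≤ N) :
    ∑ n ∈ range (N + 1), f n = f 0 + f 1 + ∑ n ∈ Icc 2 N, f n := by
  rw [← sum_range_add_sum_Ico f (by omega : 2 ≤ N + 1), Finset.Ico_add_one_right_eq_Icc]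
  simp [sum_range_succ]

section Schwarzschild

variable {m k r : ℝ}

theorem psi0_pos (hm : 0 ≤ m) (hr : 0 < r) : 0 < psi0 m r := by
  unfold psi0; positivity

theorem alphaF_pos (hm : 0 ≤ m) (hr : m / 2 < r) : 0 < alphaF m r := by
  unfold alphaF
  rw [sub_pos, div_lt_one (by linarith)]
  linarith

/-- `betaF m n r` unfolds to `betaK m (n(n+1)/2 - 1) r`, so the lemmas below, stated for any
real `k ≥ 0`, apply to the hypotheses on `I_n` as they stand. -/
noncomputable def betaK (m k r : ℝ) : ℝ := k * psi0 m r + 3 * m / (r * psi0 m r)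

theorem betaK_pos (hm : 0 < m) (hk : 0 ≤ k) (hr : 0 < r) : 0 < betaK m k r := by
  have := psi0_pos hm.le hr
  unfold betaK; positivity

noncomputable def rPsiBeta (m k r : ℝ) : ℝ := k * (r + m + m ^ 2 / (4 * r)) + 3 * m

theorem rPsiBeta_eq (hm : 0 ≤ m) (hr : 0 < r) : rPsiBeta m k r = r * psi0 m r * betaK m k r := by
  have := psi0_pos hm hr
  unfold rPsiBeta betaK
  field_simp
  unfold psi0
  field_simp
  ring

theorem rPsiBeta_pos (hm : 0 < m) (hk : 0 ≤ k) (hr : 0 < r) : 0 < rPsiBeta m k r := by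
  unfold rPsiBeta; positivity

theorem rPsiBeta_half (hm : m ≠ 0) : rPsiBeta m k (m / 2) = m * (2 * k + 3) := by
  unfold rPsiBeta
  field_simp
  ring

theorem hasDerivAt_rPsiBeta (hr : r ≠ 0) :
    HasDerivAt (rPsiBeta m k) (k * (alphaF m r * psi0 m r)) r := by
  have h := ((((hasDerivAt_id r).add_const m).add
    ((hasDerivAt_inv hr).const_mul (m ^ 2 / 4))).const_mul k).add_const (3 * m)
  refine (h.congr_deriv ?_).congr_of_eventuallyEq (Eventually.of_forall fun x => ?_)
  · simp only [alphaF, psi0]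
    field_simp
    ring
  · simp only [rPsiBeta, id, Pi.add_apply]
    ring

end Schwarzschild

section Modes

variable {m k I L Xinf : ℝ} {X Y : ℝ → ℝ}

theorem first_mode_integral_eq (hm : 0 < m) (hX : ContDiffOn ℝ 1 X (Ici (m / 2)))
    (hY : ∀ r, m / 2 < r → Y r = r ^ 2 * psi0 m r / (3 * m) * deriv X r)
    (hXinf : Tendsto X atTop (𝓝 Xinf))
    (hI : ImproperEq (fun r => X r * Y r / (r ^ 2 * psi0 m r)) (m / 2) I) :
    I = Xinf ^ 2 / (6 * m) - X (m / 2) ^ 2 / (6 * m) := by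
  refine hI.eq_sub_of_hasDerivAt (F := fun r => X r ^ 2 / (6 * m))
    ((hX.continuousOn.pow 2).div_const _) (fun r hr => ?_) ((hXinf.pow 2).div_const _)
  have hr0 : 0 < r := by linarith
  have := psi0_pos hm.le hr0
  refine ((hX.hasDerivAt_of_Ici hr).pow 2 |>.div_const _).congr_deriv ?_
  rw [hY r hr]
  field_simp
  ring

/-- The right-hand side is the derivative of `k X² / (r p B)` when `(r p B)' = k a p`. -/
theorem completing_square_identity {k a p B r X X' Y : ℝ} (ha : a ≠ 0) (hp : p ≠ 0)
    (hr : r ≠ 0) (hB : B ≠ 0) :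
    ((r * X' - B * Y) ^ 2 + 2 * k * a * X * Y) / (a * r ^ 2 * p)
        - B ^ 2 / (a * r ^ 2 * p) * (Y - r / B * X' + k * a / B ^ 2 * X) ^ 2
      = (k * (2 * X * X') * (r * p * B) - k * X ^ 2 * (k * (a * p))) / (r * p * B) ^ 2 := by
  field_simp
  ring

theorem tendsto_mul_sq_div_rPsiBeta (hm : 0 < m) (hk : 0 ≤ k)
    (hXb : ∃ C, ∀ r, m / 2 ≤ r → |X r| ≤ C) :
    Tendsto (fun r => k * X r ^ 2 / rPsiBeta m k r) atTop (𝓝 0) := by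
  obtain ⟨C, hC⟩ := hXb
  refine squeeze_zero' (g := fun r => C ^ 2 / r) ?_ ?_ (tendsto_const_nhds.div_atTop tendsto_id)
  all_goals filter_upwards [eventually_gt_atTop (m / 2)] with r hr
  all_goals have hr0 : 0 < r := by linarith
  all_goals have hρ := rPsiBeta_pos hm hk hr0
  · positivity
  · have hXC : X r ^ 2 ≤ C ^ 2 := sq_le_sq' (abs_le.1 (hC r hr.le)).1 (abs_le.1 (hC r hr.le)).2
    have hkρ : k * r ≤ rPsiBeta m k r := by
      unfold rPsiBeta
      nlinarith [show 0 ≤ k * (m + m ^ 2 / (4 * r)) by positivity]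
    rw [div_le_div_iff₀ hρ hr0]
    calc k * X r ^ 2 * r ≤ k * C ^ 2 * r := by gcongr
      _ = C ^ 2 * (k * r) := by ring
      _ ≤ C ^ 2 * rPsiBeta m k r := by gcongr

theorem mode_integral_eq_sub_boundary (hm : 0 < m) (hk : 0 ≤ k)
    (hX : ContDiffOn ℝ 1 X (Ici (m / 2))) (hXb : ∃ C, ∀ r, m / 2 ≤ r → |X r| ≤ C)
    (hI : ImproperEq (fun r => ((r * deriv X r - betaK m k r * Y r) ^ 2
        + 2 * k * alphaF m r * X r * Y r) / (alphaF m r * r ^ 2 * psi0 m r)) (m / 2) I)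
    (hL : ImproperEq (fun r => betaK m k r ^ 2 / (alphaF m r * r ^ 2 * psi0 m r) *
        (Y r - r / betaK m k r * deriv X r + k * alphaF m r / betaK m k r ^ 2 * X r) ^ 2)
        (m / 2) L) :
    I = L - k * X (m / 2) ^ 2 / (m * (2 * k + 3)) := by
  have hcont : ContinuousOn (fun r => k * X r ^ 2 / rPsiBeta m k r) (Ici (m / 2)) := by
    refine (continuousOn_const.mul (hX.continuousOn.pow 2)).div (fun r hr => ?_)
      fun r hr => (rPsiBeta_pos hm hk (by linarith [mem_Ici.1 hr])).ne'
    exact (hasDerivAt_rPsiBeta (by linarith [mem_Ici.1 hr])).continuousAt.continuousWithinAt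
  have h := (hI.sub hL).eq_sub_of_hasDerivAt hcont (fun r hr => ?_)
    (tendsto_mul_sq_div_rPsiBeta hm hk hXb)
  · rw [rPsiBeta_half hm.ne'] at h
    linarith
  · have hr0 : 0 < r := by linarith
    have hρ := rPsiBeta_pos hm hk hr0
    refine ((hX.hasDerivAt_of_Ici hr).pow 2 |>.const_mul k |>.div (hasDerivAt_rPsiBeta hr0.ne')
      hρ.ne').congr_deriv ?_
    rw [rPsiBeta_eq hm.le hr0, pow_one, completing_square_identity
      (alphaF_pos hm.le hr).ne' (psi0_pos hm.le hr0).ne' hr0.ne' (betaK_pos hm hk hr0).ne']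
    simp only [Pi.pow_apply, Nat.cast_ofNat]

theorem neg_boundary_le_mode_integral (hm : 0 < m) (hk : 0 ≤ k)
    (hX : ContDiffOn ℝ 1 X (Ici (m / 2))) (hXb : ∃ C, ∀ r, m / 2 ≤ r → |X r| ≤ C)
    (hI : ImproperEq (fun r => ((r * deriv X r - betaK m k r * Y r) ^ 2
        + 2 * k * alphaF m r * X r * Y r) / (alphaF m r * r ^ 2 * psi0 m r)) (m / 2) I)
    (hL : ∃ L, ImproperEq (fun r => betaK m k r ^ 2 / (alphaF m r * r ^ 2 * psi0 m r) *
        (Y r - r / betaK m k r * deriv X r + k * alphaF m r / betaK m k r ^ 2 * X r) ^ 2)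
        (m / 2) L) :
    -(k * X (m / 2) ^ 2 / (m * (2 * k + 3))) ≤ I := by
  obtain ⟨L, hL⟩ := hL
  have hL0 : 0 ≤ L := hL.nonneg fun r hr => by
    have hr0 : 0 < r := by linarith
    have := alphaF_pos hm.le hr
    have := psi0_pos hm.le hr0
    positivity
  rw [mode_integral_eq_sub_boundary hm hk hX hXb hI hL]
  linarith

end Modes

theorem cC_pos {n : ℕ} (hn : 2 ≤ n) : 0 < cC n := by
  have hn' : (2 : ℝ) ≤ n := by exact_mod_cast hn
  unfold cC
  exact div_pos (by positivity) (mul_pos (mul_pos (by linarith) (by positivity)) (by positivity))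

/-- This is where `c_n` comes from: it turns the boundary term of `I_n` into the difference of
the two boundary weights of `X_n(m/2)²`. -/
theorem half_mul_cC_mul_boundary {n : ℕ} (hn : 2 ≤ n) {m : ℝ} (hm : m ≠ 0) (x : ℝ) :
    m / 2 * cC n * (((n : ℝ) * ((n : ℝ) + 1) / 2 - 1) * x
        / (m * (2 * ((n : ℝ) * ((n : ℝ) + 1) / 2 - 1) + 3)))
      = 1 / 2 * (x / (2 * (n : ℝ) + 1))
        - 1 / 2 * (x / ((2 * (n : ℝ) + 1) * ((n : ℝ) ^ 2 + (n : ℝ) + 1))) := by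
  have hn' : (2 : ℝ) ≤ n := by exact_mod_cast hn
  have h1 : (n : ℝ) - 1 ≠ 0 := by linarith
  have h2 : (n : ℝ) + 2 ≠ 0 := by linarith
  have h3 : 2 * (n : ℝ) + 1 ≠ 0 := by linarith
  have h4 : (n : ℝ) ^ 2 + n + 1 ≠ 0 := by positivity
  rw [show 2 * ((n : ℝ) * ((n : ℝ) + 1) / 2 - 1) + 3 = (n : ℝ) ^ 2 + n + 1 by ring]
  unfold cC
  field_simp
  ring

theorem PtildeI_lower_bound_general (m : ℝ) (hm : 0 < m) (N0 : ℕ) (hN0 : 2 ≤ N0)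
    (Xf Yf : ℕ → ℝ → ℝ)
    (hXf : ∀ n : ℕ, n ≤ N0 → ContDiffOn ℝ 1 (Xf n) (Set.Ici (m / 2)))
    (hXbdd : ∀ n : ℕ, n ≤ N0 → ∃ C : ℝ, ∀ r : ℝ, m / 2 ≤ r → |Xf n r| ≤ C)
    (hY1 : ∀ r : ℝ, Yf 1 r = r ^ 2 * psi0 m r / (3 * m) * deriv (Xf 1) r)
    (X1inf : ℝ) (hX1inf : Filter.Tendsto (Xf 1) Filter.atTop (nhds X1inf))
    (I1 : ℝ)
    (hI1 : ImproperEq (fun r : ℝ => Xf 1 r * Yf 1 r / (r ^ 2 * psi0 m r)) (m / 2) I1)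
    (In : ℕ → ℝ)
    (hIn : ∀ n : ℕ, 2 ≤ n → n ≤ N0 →
      ImproperEq
        (fun r : ℝ => ((r * deriv (Xf n) r - betaF m n r * Yf n r) ^ 2
            + 2 * ((n : ℝ) * ((n : ℝ) + 1) / 2 - 1) * alphaF m r * Xf n r * Yf n r)
          / (alphaF m r * r ^ 2 * psi0 m r))
        (m / 2) (In n))
    (hSq : ∀ n : ℕ, 2 ≤ n → n ≤ N0 → ∃ L : ℝ,
      ImproperEq
        (fun r : ℝ => (betaF m n r) ^ 2 / (alphaF m r * r ^ 2 * psi0 m r) *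
          (Yf n r - r / betaF m n r * deriv (Xf n) r
            + ((n : ℝ) * ((n : ℝ) + 1) / 2 - 1) * alphaF m r / (betaF m n r) ^ 2 * Xf n r) ^ 2)
        (m / 2) L) :
    2 * m / 3 * I1 + m / 2 * ∑ n ∈ Finset.Icc 2 N0, cC n * In n
        + 1 / 2 * ∑ n ∈ Finset.range (N0 + 1), (Xf n (m / 2)) ^ 2 / (2 * (n : ℝ) + 1)
      ≥ 1 / 9 * X1inf ^ 2
        + 1 / 2 * ∑ n ∈ Finset.range (N0 + 1),
            (Xf n (m / 2)) ^ 2 / ((2 * (n : ℝ) + 1) * ((n : ℝ) ^ 2 + (n : ℝ) + 1)) := by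
  have hI1_eq : 2 * m / 3 * I1 = 1 / 9 * X1inf ^ 2 - 1 / 9 * Xf 1 (m / 2) ^ 2 := by
    rw [first_mode_integral_eq hm (hXf 1 (by omega)) (fun r _ => hY1 r) hX1inf hI1]
    field_simp
    ring
  have hmode : ∀ n ∈ Finset.Icc 2 N0,
      1 / 2 * (Xf n (m / 2) ^ 2 / ((2 * (n : ℝ) + 1) * ((n : ℝ) ^ 2 + (n : ℝ) + 1)))
        ≤ m / 2 * (cC n * In n) + 1 / 2 * (Xf n (m / 2) ^ 2 / (2 * (n : ℝ) + 1)) := by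
    intro n hn
    obtain ⟨h2n, hnN⟩ := Finset.mem_Icc.1 hn
    have hn' : (2 : ℝ) ≤ n := by exact_mod_cast h2n
    have hb := mul_le_mul_of_nonneg_left (neg_boundary_le_mode_integral hm (by nlinarith)
      (hXf n hnN) (hXbdd n hnN) (hIn n h2n hnN) (hSq n h2n hnN))
      (mul_nonneg (by positivity) (cC_pos h2n).le : 0 ≤ m / 2 * cC n)
    rw [mul_neg, half_mul_cC_mul_boundary h2n hm.ne'] at hb
    linarith
  have hsum := Finset.sum_le_sum hmode
  rw [Finset.sum_add_distrib, ← Finset.mul_sum, ← Finset.mul_sum, ← Finset.mul_sum] at hsum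
  rw [Finset.sum_range_succ_eq_add_add_sum_Icc _ (by omega),
    Finset.sum_range_succ_eq_add_add_sum_Icc _ (by omega), hI1_eq]
  simp only [Nat.cast_zero, Nat.cast_one]
  linarith

/-- Estimate (43):
`(2m/3) I₁ + (m/2) Σ_{n≥2} c_n I_n + (1/2) Σ_{n≥0} X_n(m/2)²/(2n+1)`
`≥ (1/9) X₁∞² + (1/2) Σ_{n≥0} X_n(m/2)²/((2n+1)(n²+n+1))`. -/
theorem PtildeI_lower_bound (m : ℝ) (hm : 0 < m) (N0 : ℕ) (hN0 : 2 ≤ N0)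
    (Xf Yf : ℕ → ℝ → ℝ)
    (hXf : ∀ n : ℕ, n ≤ N0 → ContDiffOn ℝ 1 (Xf n) (Set.Ici (m / 2)))
    (hXbdd : ∀ n : ℕ, n ≤ N0 → ∃ C : ℝ, ∀ r : ℝ, m / 2 ≤ r → |Xf n r| ≤ C)
    (hYf : ∀ n : ℕ, 1 ≤ n → n ≤ N0 → ContinuousOn (Yf n) (Set.Ici (m / 2)))
    (hY1 : ∀ r : ℝ, Yf 1 r = r ^ 2 * psi0 m r / (3 * m) * deriv (Xf 1) r)
    (X1inf : ℝ) (hX1inf : Filter.Tendsto (Xf 1) Filter.atTop (nhds X1inf))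
    (I1 : ℝ)
    (hI1 : ImproperEq (fun r : ℝ => Xf 1 r * Yf 1 r / (r ^ 2 * psi0 m r)) (m / 2) I1)
    (In : ℕ → ℝ)
    (hIn : ∀ n : ℕ, 2 ≤ n → n ≤ N0 →
      ImproperEq
        (fun r : ℝ => ((r * deriv (Xf n) r - betaF m n r * Yf n r) ^ 2
            + 2 * ((n : ℝ) * ((n : ℝ) + 1) / 2 - 1) * alphaF m r * Xf n r * Yf n r)
          / (alphaF m r * r ^ 2 * psi0 m r))
        (m / 2) (In n))
    (hSq : ∀ n : ℕ, 2 ≤ n → n ≤ N0 → ∃ L : ℝ,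
      ImproperEq
        (fun r : ℝ => (betaF m n r) ^ 2 / (alphaF m r * r ^ 2 * psi0 m r) *
          (Yf n r - r / betaF m n r * deriv (Xf n) r
            + ((n : ℝ) * ((n : ℝ) + 1) / 2 - 1) * alphaF m r / (betaF m n r) ^ 2 * Xf n r) ^ 2)
        (m / 2) L) :
    2 * m / 3 * I1 + m / 2 * ∑ n ∈ Finset.Icc 2 N0, cC n * In n
        + 1 / 2 * ∑ n ∈ Finset.range (N0 + 1), (Xf n (m / 2)) ^ 2 / (2 * (n : ℝ) + 1)
      ≥ 1 / 9 * X1inf ^ 2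
        + 1 / 2 * ∑ n ∈ Finset.range (N0 + 1),
            (Xf n (m / 2)) ^ 2 / ((2 * (n : ℝ) + 1) * ((n : ℝ) ^ 2 + (n : ℝ) + 1)) :=
  PtildeI_lower_bound_general m hm N0 hN0 Xf Yf hXf hXbdd hY1 X1inf hX1inf I1 hI1 In hIn hSq
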